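/- arXiv:0903.4067 — 2 statements merged into one kernel-verified Lean document; each statement's English description precedes it below -/
import Mathlib

section
/- Let k be a field of characteristic 0, n ≥ 1, and f_n = FreeLieAlgebra k (Fin n) with generators x_1, …, x_n. For indices a ≠ b in {0, 1, …, n}, let D_{ab} = D_{ba} be Lie algebra derivations of f_n with the following values on generators: for 1 ≤ i ≤ n, D_{0i}(x_j) = ⁅x_i, x_j⁆ for all j; and for 1 ≤ i < j ≤ n, D_{ij}(x_i) = ⁅x_i, x_j⁆, D_{ij}(x_j) = ⁅x_j, x_i⁆, and D_{ij}(x_k) = 0 for k ≠ i, j. Then these derivations satisfy the infinitesimal braid relations: ⁅D_{ab}, D_{ac} + D_{bc}⁆ = 0 for all distinct a, b, c ∈ {0, …, n}, and ⁅D_{ab}, D_{cd}⁆ = 0 for all distinct a, b, c, d ∈ {0, …, n} (brackets of derivations being commutators). In particular the assignment t_{ab} ↦ D_{ab} defines a Lie algebra morphism ad : t_{n+1} → Der(f_n) landing in the tangential derivations. -/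
/-!
The Lie algebra `t_N` of infinitesimal braids over a field `k` of characteristic 0:
quotient of the free Lie algebra on generators `T (i,j)` (for `i ≠ j` in `Fin N`)
by the Lie ideal generated by the symmetry relations `T (i,j) - T (j,i)`, the
relations `⁅T (i,j), T (i,l) + T (j,l)⁆` for distinct `i, j, l` and
`⁅T (i,j), T (l,m)⁆` for distinct `i, j, k, l`.
-/

/-- Index type for the generators `T_{ij}` of `t_N`. -/
abbrev tGenIdx (N : ℕ) := {p : Fin N × Fin N // p.1 ≠ p.2}

/-- The free generator `T_{ij}`. -/
noncomputable def Tgen (k : Type) [Field k] [CharZero k] {N : ℕ} (i j : Fin N) (h : i ≠ j) :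
    FreeLieAlgebra k (tGenIdx N) :=
  FreeLieAlgebra.of k ⟨(i, j), h⟩

/-- The defining relations of the infinitesimal braid Lie algebra. -/
def tRels (k : Type) [Field k] [CharZero k] (N : ℕ) :
    Set (FreeLieAlgebra k (tGenIdx N)) :=
  { x |
    (∃ (i j : Fin N) (h : i ≠ j),
        x = Tgen k i j h - Tgen k j i h.symm) ∨
    (∃ (i j l : Fin N) (h₁ : i ≠ j) (h₂ : i ≠ l) (h₃ : j ≠ l),
        x = ⁅Tgen k i j h₁, Tgen k i l h₂ + Tgen k j l h₃⁆) ∨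
    (∃ (i j l m : Fin N) (h₁ : i ≠ j) (h₂ : l ≠ m),
        i ≠ l ∧ i ≠ m ∧ j ≠ l ∧ j ≠ m ∧
        x = ⁅Tgen k i j h₁, Tgen k l m h₂⁆) }

/-- The Lie ideal generated by the infinitesimal braid relations. -/
noncomputable def tIdeal (k : Type) [Field k] [CharZero k] (N : ℕ) :
    LieIdeal k (FreeLieAlgebra k (tGenIdx N)) :=
  LieSubmodule.lieSpan k _ (tRels k N)

/-- The Lie algebra `t_N` of infinitesimal braids. -/
abbrev tAlg (k : Type) [Field k] [CharZero k] (N : ℕ) :=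
  FreeLieAlgebra k (tGenIdx N) ⧸ tIdeal k N

/-- The generator `t_{ab}` of `t_N` (junk value `0` if `a = b`). -/
noncomputable def tt (k : Type) [Field k] [CharZero k] {N : ℕ} (a b : Fin N) :
    tAlg k N :=
  if h : a ≠ b then LieSubmodule.Quotient.mk' (tIdeal k N) (Tgen k a b h) else 0

/-!
Each `D_{ab}` is determined by its values on the generators, so every relation is checked on
the generators `x_p`. The derivations `D_{0i} = ad x_i` are inner, and `⁅E, ad x⁆ = ad (E x)`
turns each relation involving strand `0` into an identity between values on generators, such
as `D_{ij}(x_i + x_j) = 0`. Among the other strands, `⁅D_{ij}, D_{il} + D_{jl}⁆` vanishes on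
`x_i` and `x_j` by the Jacobi identity and on `x_l` because `D_{ij}(x_i + x_j) = 0`.
-/

namespace FreeLieAlgebra

variable {R X : Type*} [CommRing R]

theorem lieSpan_range_of :
    LieSubalgebra.lieSpan R (FreeLieAlgebra R X) (Set.range (of R)) = ⊤ := by
  set S := LieSubalgebra.lieSpan R (FreeLieAlgebra R X) (Set.range (of R))
  let g : FreeLieAlgebra R X →ₗ⁅R⁆ S :=
    lift R fun x => ⟨of R x, LieSubalgebra.subset_lieSpan ⟨x, rfl⟩⟩
  have hg : S.incl.comp g = LieHom.id := hom_ext fun x => by simp [g]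
  refine eq_top_iff.2 fun y _ => ?_
  have hy : S.incl (g y) = y := LieHom.congr_fun hg y
  exact hy ▸ (g y).2

theorem lieDerivation_ext {D₁ D₂ : LieDerivation R (FreeLieAlgebra R X) (FreeLieAlgebra R X)}
    (h : ∀ x, D₁ (of R x) = D₂ (of R x)) : D₁ = D₂ :=
  LieDerivation.ext_of_lieSpan_eq_top _ lieSpan_range_of (by rintro _ ⟨x, rfl⟩; exact h x)

/-- The tangential derivation by which `t_{ij}` acts, for strands `i, j ≠ 0`. -/
structure IsPairDerivation (D : LieDerivation R (FreeLieAlgebra R X) (FreeLieAlgebra R X))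
    (i j : X) : Prop where
  apply_left : D (of R i) = ⁅of R i, of R j⁆
  apply_right : D (of R j) = ⁅of R j, of R i⁆
  apply_of_ne : ∀ p, p ≠ i → p ≠ j → D (of R p) = 0

namespace IsPairDerivation

variable {D D₁ D₂ D₃ : LieDerivation R (FreeLieAlgebra R X) (FreeLieAlgebra R X)} {i j l m p : X}

theorem symm (h : IsPairDerivation D i j) : IsPairDerivation D j i :=
  ⟨h.apply_right, h.apply_left, fun p hj hi => h.apply_of_ne p hi hj⟩

theorem apply_add_eq_zero (h : IsPairDerivation D i j) : D (of R i + of R j) = 0 := by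
  rw [map_add, h.apply_left, h.apply_right, ← lie_skew, neg_add_cancel]

theorem lie_add_apply_left_eq_zero (hij : i ≠ j) (hil : i ≠ l) (hjl : j ≠ l)
    (h₁ : IsPairDerivation D₁ i j) (h₂ : IsPairDerivation D₂ i l) (h₃ : IsPairDerivation D₃ j l) :
    ⁅D₁, D₂ + D₃⁆ (of R i) = 0 := by
  simp only [LieDerivation.lie_apply, LieDerivation.add_apply, LieDerivation.apply_lie_eq_sub,
    h₁.apply_left, h₂.apply_left, h₃.apply_left, h₃.apply_of_ne i hij hil,
    h₁.apply_of_ne l hil.symm hjl.symm, h₂.apply_of_ne j hij.symm hjl, lie_zero, add_zero,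
    zero_add, zero_sub]
  linear_combination (norm := skip) -lie_jacobi (of R i) (of R j) (of R l)
  rw [← lie_skew (of R i) (of R l), lie_neg]
  abel

theorem lie_add_eq_zero (hij : i ≠ j) (hil : i ≠ l) (hjl : j ≠ l) (h₁ : IsPairDerivation D₁ i j)
    (h₂ : IsPairDerivation D₂ i l) (h₃ : IsPairDerivation D₃ j l) : ⁅D₁, D₂ + D₃⁆ = 0 := by
  refine lieDerivation_ext fun p => ?_
  rcases eq_or_ne p i with rfl | hpi
  · exact lie_add_apply_left_eq_zero hij hil hjl h₁ h₂ h₃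
  rcases eq_or_ne p j with rfl | hpj
  · rw [add_comm]
    exact lie_add_apply_left_eq_zero hij.symm hjl hil h₁.symm h₃ h₂
  rcases eq_or_ne p l with rfl | hpl
  · rw [LieDerivation.lie_apply, LieDerivation.add_apply, h₂.apply_right, h₃.apply_right,
      ← lie_add, LieDerivation.apply_lie_eq_sub, h₁.apply_add_eq_zero, h₁.apply_of_ne p hpi hpj]
    simp
  · simp [h₁.apply_of_ne p hpi hpj, h₂.apply_of_ne p hpi hpl, h₃.apply_of_ne p hpj hpl]

theorem lie_apply_left_eq_zero_of_disjoint (hil : i ≠ l) (him : i ≠ m) (hjl : j ≠ l)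
    (hjm : j ≠ m) (h₁ : IsPairDerivation D₁ i j) (h₂ : IsPairDerivation D₂ l m) :
    ⁅D₁, D₂⁆ (of R i) = 0 := by
  simp [h₁.apply_left, h₂.apply_of_ne i hil him, h₂.apply_of_ne j hjl hjm]

theorem lie_eq_zero_of_disjoint (hil : i ≠ l) (him : i ≠ m) (hjl : j ≠ l) (hjm : j ≠ m)
    (h₁ : IsPairDerivation D₁ i j) (h₂ : IsPairDerivation D₂ l m) : ⁅D₁, D₂⁆ = 0 := by
  refine lieDerivation_ext fun p => ?_
  rcases eq_or_ne p i with rfl | hpi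
  · exact lie_apply_left_eq_zero_of_disjoint hil him hjl hjm h₁ h₂
  rcases eq_or_ne p j with rfl | hpj
  · exact lie_apply_left_eq_zero_of_disjoint hjl hjm hil him h₁.symm h₂
  rcases eq_or_ne p l with rfl | hpl
  · rw [← lie_skew, LieDerivation.neg_apply,
      lie_apply_left_eq_zero_of_disjoint hil.symm hjl.symm him.symm hjm.symm h₂ h₁]
    simp
  rcases eq_or_ne p m with rfl | hpm
  · rw [← lie_skew, LieDerivation.neg_apply,
      lie_apply_left_eq_zero_of_disjoint him.symm hjm.symm hil.symm hjl.symm h₂.symm h₁]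
    simp
  · simp [h₁.apply_of_ne p hpi hpj, h₂.apply_of_ne p hpl hpm]

theorem ad_lie_ad_add_eq_zero (h : IsPairDerivation D i j) :
    ⁅LieDerivation.ad R _ (of R i), LieDerivation.ad R _ (of R j) + D⁆ = 0 := by
  rw [lie_add, ← LieHom.map_lie, ← lie_skew _ D, LieDerivation.lie_der_ad_eq_ad_der, h.apply_left,
    add_neg_cancel]

theorem lie_ad_add_ad_eq_zero (h : IsPairDerivation D i j) :
    ⁅D, LieDerivation.ad R _ (of R i) + LieDerivation.ad R _ (of R j)⁆ = 0 := by
  rw [← map_add, LieDerivation.lie_der_ad_eq_ad_der, h.apply_add_eq_zero, map_zero]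

theorem ad_lie_eq_zero (h : IsPairDerivation D i j) (hpi : p ≠ i) (hpj : p ≠ j) :
    ⁅LieDerivation.ad R _ (of R p), D⁆ = 0 := by
  rw [← lie_skew, LieDerivation.lie_der_ad_eq_ad_der, h.apply_of_ne p hpi hpj, map_zero, neg_zero]

end IsPairDerivation

end FreeLieAlgebra

open FreeLieAlgebra

/-- `D a b` is the action of `t_{ab}` on `f_n` of Section 1.3. -/
structure IsAdFamily {R : Type*} [CommRing R] {n : ℕ}
    (D : Fin (n + 1) → Fin (n + 1) →
      LieDerivation R (FreeLieAlgebra R (Fin n)) (FreeLieAlgebra R (Fin n))) : Prop where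
  symm : ∀ a b, D a b = D b a
  zero_succ : ∀ i, D 0 i.succ = LieDerivation.ad R _ (of R i)
  succ_succ : ∀ i j, i ≠ j → IsPairDerivation (D i.succ j.succ) i j

namespace IsAdFamily

variable {R : Type*} [CommRing R] {n : ℕ}
  {D : Fin (n + 1) → Fin (n + 1) →
    LieDerivation R (FreeLieAlgebra R (Fin n)) (FreeLieAlgebra R (Fin n))}

theorem lie_add_eq_zero (hD : IsAdFamily D) (a b c : Fin (n + 1)) (hab : a ≠ b) (hac : a ≠ c)
    (hbc : b ≠ c) : ⁅D a b, D a c + D b c⁆ = 0 := by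
  rcases Fin.eq_zero_or_eq_succ a with rfl | ⟨i, rfl⟩
  · obtain ⟨j, rfl⟩ := Fin.exists_succ_eq.2 hab.symm
    obtain ⟨l, rfl⟩ := Fin.exists_succ_eq.2 hac.symm
    rw [hD.zero_succ, hD.zero_succ]
    exact (hD.succ_succ j l (ne_of_apply_ne _ hbc)).ad_lie_ad_add_eq_zero
  rcases Fin.eq_zero_or_eq_succ b with rfl | ⟨j, rfl⟩
  · obtain ⟨l, rfl⟩ := Fin.exists_succ_eq.2 hbc.symm
    rw [hD.symm _ 0, hD.zero_succ, hD.zero_succ, add_comm]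
    exact (hD.succ_succ i l (ne_of_apply_ne _ hac)).ad_lie_ad_add_eq_zero
  rcases Fin.eq_zero_or_eq_succ c with rfl | ⟨l, rfl⟩
  · rw [hD.symm _ 0, hD.symm _ 0, hD.zero_succ, hD.zero_succ]
    exact (hD.succ_succ i j (ne_of_apply_ne _ hab)).lie_ad_add_ad_eq_zero
  · have hij := ne_of_apply_ne _ hab
    have hil := ne_of_apply_ne _ hac
    have hjl := ne_of_apply_ne _ hbc
    exact IsPairDerivation.lie_add_eq_zero hij hil hjl (hD.succ_succ i j hij)
      (hD.succ_succ i l hil) (hD.succ_succ j l hjl)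

theorem lie_eq_zero (hD : IsAdFamily D) (a b c d : Fin (n + 1)) (hab : a ≠ b) (hac : a ≠ c)
    (had : a ≠ d) (hbc : b ≠ c) (hbd : b ≠ d) (hcd : c ≠ d) : ⁅D a b, D c d⁆ = 0 := by
  rcases Fin.eq_zero_or_eq_succ a with rfl | ⟨i, rfl⟩
  · obtain ⟨j, rfl⟩ := Fin.exists_succ_eq.2 hab.symm
    obtain ⟨l, rfl⟩ := Fin.exists_succ_eq.2 hac.symm
    obtain ⟨m, rfl⟩ := Fin.exists_succ_eq.2 had.symm
    rw [hD.zero_succ]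
    exact (hD.succ_succ l m (ne_of_apply_ne _ hcd)).ad_lie_eq_zero (ne_of_apply_ne _ hbc)
      (ne_of_apply_ne _ hbd)
  rcases Fin.eq_zero_or_eq_succ b with rfl | ⟨j, rfl⟩
  · obtain ⟨l, rfl⟩ := Fin.exists_succ_eq.2 hbc.symm
    obtain ⟨m, rfl⟩ := Fin.exists_succ_eq.2 hbd.symm
    rw [hD.symm _ 0, hD.zero_succ]
    exact (hD.succ_succ l m (ne_of_apply_ne _ hcd)).ad_lie_eq_zero (ne_of_apply_ne _ hac)
      (ne_of_apply_ne _ had)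
  have hij := ne_of_apply_ne _ hab
  rcases Fin.eq_zero_or_eq_succ c with rfl | ⟨l, rfl⟩
  · obtain ⟨m, rfl⟩ := Fin.exists_succ_eq.2 hcd.symm
    rw [← lie_skew, hD.zero_succ, (hD.succ_succ i j hij).ad_lie_eq_zero (ne_of_apply_ne _ had).symm
      (ne_of_apply_ne _ hbd).symm, neg_zero]
  rcases Fin.eq_zero_or_eq_succ d with rfl | ⟨m, rfl⟩
  · rw [← lie_skew, hD.symm _ 0, hD.zero_succ, (hD.succ_succ i j hij).ad_lie_eq_zero
      (ne_of_apply_ne _ hac).symm (ne_of_apply_ne _ hbc).symm, neg_zero]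
  · exact IsPairDerivation.lie_eq_zero_of_disjoint (ne_of_apply_ne _ hac) (ne_of_apply_ne _ had)
      (ne_of_apply_ne _ hbc) (ne_of_apply_ne _ hbd) (hD.succ_succ i j hij)
      (hD.succ_succ l m (ne_of_apply_ne _ hcd))

end IsAdFamily

namespace LieSubmodule.Quotient

variable {R L L' : Type*} [CommRing R] [LieRing L] [LieAlgebra R L] [LieRing L'] [LieAlgebra R L']

def lift (I : LieIdeal R L) (f : L →ₗ⁅R⁆ L') (hf : I ≤ f.ker) : L ⧸ I →ₗ⁅R⁆ L' :=
  { (I : Submodule R L).liftQ (f : L →ₗ[R] L') fun x hx => LieHom.mem_ker.mp (hf hx) with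
    map_lie' := by
      intro x y
      induction x using Submodule.Quotient.induction_on
      induction y using Submodule.Quotient.induction_on
      exact f.map_lie _ _ }

@[simp]
theorem lift_mk (I : LieIdeal R L) (f : L →ₗ⁅R⁆ L') (hf : I ≤ f.ker) (x : L) :
    lift I f hf (mk' I x) = f x :=
  rfl

end LieSubmodule.Quotient

theorem tAlg.exists_lieHom_tt_eq (k : Type) [Field k] [CharZero k] {N : ℕ} {M : Type*} [LieRing M]
    [LieAlgebra k M] (f : Fin N → Fin N → M) (hsymm : ∀ a b, f a b = f b a)
    (hadd : ∀ a b c, a ≠ b → a ≠ c → b ≠ c → ⁅f a b, f a c + f b c⁆ = 0)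
    (hcomm : ∀ a b c d, a ≠ b → a ≠ c → a ≠ d → b ≠ c → b ≠ d → c ≠ d → ⁅f a b, f c d⁆ = 0) :
    ∃ φ : tAlg k N →ₗ⁅k⁆ M, ∀ a b, a ≠ b → φ (tt k a b) = f a b := by
  let F : FreeLieAlgebra k (tGenIdx N) →ₗ⁅k⁆ M := FreeLieAlgebra.lift k fun p => f p.1.1 p.1.2
  have hF (a b : Fin N) (h : a ≠ b) : F (Tgen k a b h) = f a b := by simp [F, Tgen]
  have hrels : tIdeal k N ≤ F.ker := by
    rw [tIdeal, LieSubmodule.lieSpan_le]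
    rintro x (⟨a, b, h, rfl⟩ | ⟨a, b, c, hab, hac, hbc, rfl⟩ |
      ⟨a, b, c, d, hab, hcd, hac, had, hbc, hbd, rfl⟩) <;>
      simp only [SetLike.mem_coe, LieHom.mem_ker, LieHom.map_lie, map_sub, map_add, hF]
    · exact sub_eq_zero.2 (hsymm a b)
    · exact hadd a b c hab hac hbc
    · exact hcomm a b c d hab hac had hbc hbd hcd
  refine ⟨LieSubmodule.Quotient.lift _ F hrels, fun a b hab => ?_⟩
  rw [tt, dif_pos hab, LieSubmodule.Quotient.lift_mk, hF]

/-- Strand indices `{0, …, n}` are modelled by `Fin (n+1)`, the generator `x_i` (for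
`1 ≤ i ≤ n`) by `of k i` with `i : Fin n`, and the strand index of `x_i` is `i.succ`. -/
theorem ad_infinitesimal_braid_relations_general (k : Type) [Field k] [CharZero k]
    (n : ℕ)
    (D : Fin (n + 1) → Fin (n + 1) →
      LieDerivation k (FreeLieAlgebra k (Fin n)) (FreeLieAlgebra k (Fin n)))
    (hsymm : ∀ a b : Fin (n + 1), D a b = D b a)
    (h0 : ∀ (i : Fin n) (j : Fin n),
      D 0 i.succ (of k j) = ⁅of k i, of k j⁆)
    (h1 : ∀ (i j : Fin n), i < j →
      D i.succ j.succ (of k i) = ⁅of k i, of k j⁆)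
    (h2 : ∀ (i j : Fin n), i < j →
      D i.succ j.succ (of k j) = ⁅of k j, of k i⁆)
    (h3 : ∀ (i j l : Fin n), i < j → l ≠ i → l ≠ j →
      D i.succ j.succ (of k l) = 0) :
    (∀ a b c : Fin (n + 1), a ≠ b → a ≠ c → b ≠ c →
      ⁅D a b, D a c + D b c⁆ = 0) ∧
    (∀ a b c d : Fin (n + 1), a ≠ b → a ≠ c → a ≠ d → b ≠ c → b ≠ d → c ≠ d →
      ⁅D a b, D c d⁆ = 0) ∧
    ∃ φ : tAlg k (n + 1) →ₗ⁅k⁆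
        LieDerivation k (FreeLieAlgebra k (Fin n)) (FreeLieAlgebra k (Fin n)),
      ∀ (a b : Fin (n + 1)), a ≠ b → φ (tt k a b) = D a b := by
  have hpair (i j : Fin n) (h : i < j) : IsPairDerivation (D i.succ j.succ) i j :=
    ⟨h1 i j h, h2 i j h, fun l hli hlj => h3 i j l h hli hlj⟩
  have hD : IsAdFamily D :=
    { symm := hsymm
      zero_succ := fun i => lieDerivation_ext fun j => by simp [h0]
      succ_succ := fun i j hij => by
        rcases hij.lt_or_gt with h | h
        · exact hpair i j h
        · exact hsymm i.succ j.succ ▸ (hpair j i h).symm }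
  exact ⟨hD.lie_add_eq_zero, hD.lie_eq_zero,
    tAlg.exists_lieHom_tt_eq k D hsymm hD.lie_add_eq_zero hD.lie_eq_zero⟩

/-- Section 1.3: the tangential derivations `D_{ab}` of the free Lie algebra `f_n`
(`D_{0i} : x_j ↦ ⁅x_i, x_j⁆`; for `i < j`, `D_{ij} : x_i ↦ ⁅x_i, x_j⁆`,
`x_j ↦ ⁅x_j, x_i⁆`, `x_l ↦ 0` otherwise) satisfy the infinitesimal braid
relations; in particular `t_{ab} ↦ D_{ab}` defines a Lie algebra morphism
`ad : t_{n+1} → Der(f_n)` landing in the tangential derivations.  Strand indices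
`{0, …, n}` are modelled by `Fin (n+1)`, the generator `x_i` (for `1 ≤ i ≤ n`)
by `of k i` with `i : Fin n`, and the strand index of `x_i` is `i.succ`. -/
theorem ad_infinitesimal_braid_relations (k : Type) [Field k] [CharZero k]
    (n : ℕ) (hn : 1 ≤ n)
    (D : Fin (n + 1) → Fin (n + 1) →
      LieDerivation k (FreeLieAlgebra k (Fin n)) (FreeLieAlgebra k (Fin n)))
    (hsymm : ∀ a b : Fin (n + 1), D a b = D b a)
    (h0 : ∀ (i : Fin n) (j : Fin n),
      D 0 i.succ (of k j) = ⁅of k i, of k j⁆)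
    (h1 : ∀ (i j : Fin n), i < j →
      D i.succ j.succ (of k i) = ⁅of k i, of k j⁆)
    (h2 : ∀ (i j : Fin n), i < j →
      D i.succ j.succ (of k j) = ⁅of k j, of k i⁆)
    (h3 : ∀ (i j l : Fin n), i < j → l ≠ i → l ≠ j →
      D i.succ j.succ (of k l) = 0) :
    (∀ a b c : Fin (n + 1), a ≠ b → a ≠ c → b ≠ c →
      ⁅D a b, D a c + D b c⁆ = 0) ∧
    (∀ a b c d : Fin (n + 1), a ≠ b → a ≠ c → a ≠ d → b ≠ c → b ≠ d → c ≠ d →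
      ⁅D a b, D c d⁆ = 0) ∧
    ∃ φ : tAlg k (n + 1) →ₗ⁅k⁆
        LieDerivation k (FreeLieAlgebra k (Fin n)) (FreeLieAlgebra k (Fin n)),
      ∀ (a b : Fin (n + 1)), a ≠ b → φ (tt k a b) = D a b :=
  ad_infinitesimal_braid_relations_general k n D hsymm h0 h1 h2 h3
end

section
/- Let k be a field of characteristic 0 and let L = FreeLieAlgebra k (Fin 2) be the free Lie algebra on two generators a, b. Let L′ = ⁅L, L⁆ be the derived ideal and L′′ = ⁅L′, L′⁆ the second derived ideal. Then the images in the quotient k-vector space L′/L′′ of the elements (ad a)^p (ad b)^q (⁅a, b⁆), for (p, q) ∈ ℕ × ℕ, form a basis of L′/L′′. -/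
/-!
Spanning: modulo `L''`, `ad b` commutes with `ad a` on `L'`, because their commutator `ad ⁅b, a⁆`
maps `L'` into `L''`. Hence `L''` plus the span of the words `(ad a)^p (ad b)^q ⁅a, b⁆` is stable
under `ad a` and `ad b`, so under all of `L`, and it contains every bracket of generators; so it
contains `L'`.

Independence: the representation `a ↦ X₀ E₀₀`, `b ↦ X₁ E₀₀ + X₂ E₀₁` of `L` by `2 × 2` matrices
with zero bottom row over `k[X₀, X₁, X₂]` has abelian derived algebra (it lies in the corner `E₀₁`),
so it kills `L''`, and it sends the word indexed by `(p, q)` to `X₀^(p+1) X₁^q X₂ E₀₁`.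
-/

/-- The element `(ad a)^p (ad b)^q (⁅a, b⁆)` of the free Lie algebra on two
generators `a = of 0`, `b = of 1`. -/
noncomputable def adWord (k : Type) [Field k] [CharZero k] (pq : ℕ × ℕ) :
    FreeLieAlgebra k (Fin 2) :=
  (fun y => ⁅FreeLieAlgebra.of k (0 : Fin 2), y⁆)^[pq.1]
    ((fun y => ⁅FreeLieAlgebra.of k (1 : Fin 2), y⁆)^[pq.2]
      ⁅FreeLieAlgebra.of k (0 : Fin 2), FreeLieAlgebra.of k (1 : Fin 2)⁆)

theorem FreeLieAlgebra.lieSpan_range_of_s16 (R X : Type*) [CommRing R] :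
    LieSubalgebra.lieSpan R (FreeLieAlgebra R X) (Set.range (FreeLieAlgebra.of R)) = ⊤ := by
  set S := LieSubalgebra.lieSpan R (FreeLieAlgebra R X) (Set.range (FreeLieAlgebra.of R))
  let ι : X → S := fun x => ⟨FreeLieAlgebra.of R x, LieSubalgebra.subset_lieSpan ⟨x, rfl⟩⟩
  have hS : S.incl.comp (FreeLieAlgebra.lift R ι) = LieHom.id :=
    FreeLieAlgebra.hom_ext fun x => by simp [ι, FreeLieAlgebra.lift_of_apply]
  refine eq_top_iff.mpr fun x _ => ?_
  have hx : S.incl (FreeLieAlgebra.lift R ι x) = x := DFunLike.congr_fun hS x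
  exact hx ▸ (FreeLieAlgebra.lift R ι x).2

section Generators

variable {R L : Type*} [CommRing R] [LieRing L] [LieAlgebra R L] {s : Set L}

theorem LieSubmodule.lie_toSubmodule_le {M : Type*} [AddCommGroup M] [Module R M]
    [LieRingModule L M] [LieModule R L M] {I : LieIdeal R L} {N : LieSubmodule R L M}
    {P : Submodule R M} (h : ∀ x ∈ I, ∀ m ∈ N, ⁅x, m⁆ ∈ P) :
    (⁅I, N⁆ : LieSubmodule R L M).toSubmodule ≤ P := by
  rw [LieSubmodule.lieIdeal_oper_eq_linear_span', Submodule.span_le]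
  rintro _ ⟨x, hx, m, hm, rfl⟩
  exact h x hx m hm

theorem Submodule.lie_mem_of_lieSpan_eq_top (hs : LieSubalgebra.lieSpan R L s = ⊤)
    {N : Submodule R L} (hN : ∀ x ∈ s, ∀ n ∈ N, ⁅x, n⁆ ∈ N) (x : L) {n : L} (hn : n ∈ N) :
    ⁅x, n⁆ ∈ N := by
  have hx : x ∈ LieSubalgebra.lieSpan R L s := hs ▸ LieSubalgebra.mem_top x
  induction hx using LieSubalgebra.lieSpan_induction generalizing n with
  | mem x hx => exact hN x hx n hn
  | zero => simp
  | add x y _ _ hx hy => rw [add_lie]; exact N.add_mem (hx hn) (hy hn)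
  | smul t x _ hx => rw [smul_lie]; exact N.smul_mem t (hx hn)
  | lie x y _ _ hx hy => rw [lie_lie]; exact N.sub_mem (hx (hy hn)) (hy (hx hn))

theorem LieAlgebra.derivedSeries_one_le_of_lieSpan_eq_top (hs : LieSubalgebra.lieSpan R L s = ⊤)
    {N : Submodule R L} (hN : ∀ x ∈ s, ∀ n ∈ N, ⁅x, n⁆ ∈ N)
    (hs_lie : ∀ x ∈ s, ∀ y ∈ s, ⁅x, y⁆ ∈ N) :
    (derivedSeries R L 1).toSubmodule ≤ N := by
  have ad_mem := N.lie_mem_of_lieSpan_eq_top hs hN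
  have h_gen : ∀ x ∈ s, ∀ y, ⁅x, y⁆ ∈ N := by
    intro x hx y
    have hy : y ∈ LieSubalgebra.lieSpan R L s := hs ▸ LieSubalgebra.mem_top y
    induction hy using LieSubalgebra.lieSpan_induction with
    | mem y hy => exact hs_lie x hx y hy
    | zero => simp
    | add y z _ _ hy hz => rw [lie_add]; exact N.add_mem hy hz
    | smul t y _ hy => rw [lie_smul]; exact N.smul_mem t hy
    | lie y z _ _ hy hz =>
      rw [leibniz_lie, ← lie_skew ⁅x, y⁆ z]
      exact N.add_mem (N.neg_mem (ad_mem z hy)) (ad_mem y hz)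
  suffices h : ∀ x y, ⁅x, y⁆ ∈ N from LieSubmodule.lie_toSubmodule_le fun x _ y _ => h x y
  intro x y
  have hx : x ∈ LieSubalgebra.lieSpan R L s := hs ▸ LieSubalgebra.mem_top x
  induction hx using LieSubalgebra.lieSpan_induction with
  | mem x hx => exact h_gen x hx y
  | zero => simp
  | add x z _ _ hx hz => rw [add_lie]; exact N.add_mem hx hz
  | smul t x _ hx => rw [smul_lie]; exact N.smul_mem t hx
  | lie x z _ _ hx hz => rw [lie_lie]; exact N.sub_mem (ad_mem x hz) (ad_mem z hx)

end Generators

attribute [local instance] LieRing.ofAssociativeRing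

open MvPolynomial

section Matrix

variable {A : Type*} [CommRing A]

theorem Matrix.lie_eq_single_of_row_one_eq_zero {M N : Matrix (Fin 2) (Fin 2) A}
    (hM : M 1 = 0) (hN : N 1 = 0) :
    ⁅M, N⁆ = Matrix.single 0 1 (M 0 0 * N 0 1 - N 0 0 * M 0 1) := by
  have hM' : ∀ j, M 1 j = 0 := congrFun hM
  have hN' : ∀ j, N 1 j = 0 := congrFun hN
  ext i j
  fin_cases i <;> fin_cases j <;>
    simp [Ring.lie_def, Matrix.mul_apply, Fin.sum_univ_two, hM', hN']
  ring

theorem Matrix.iterate_lie_single_zero_one {M : Matrix (Fin 2) (Fin 2) A} (hM : M 1 = 0)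
    (n : ℕ) (t : A) :
    (fun N : Matrix (Fin 2) (Fin 2) A => ⁅M, N⁆)^[n] (Matrix.single 0 1 t) =
      Matrix.single 0 1 (M 0 0 ^ n * t) := by
  induction n with
  | zero => simp
  | succ n ih =>
    rw [Function.iterate_succ_apply', ih,
      Matrix.lie_eq_single_of_row_one_eq_zero hM (by ext j; simp)]
    simp [pow_succ', mul_assoc]

end Matrix

section AffineRepresentation

variable (k : Type*) [CommRing k]

noncomputable def affineRep :
    FreeLieAlgebra k (Fin 2) →ₗ⁅k⁆ Matrix (Fin 2) (Fin 2) (MvPolynomial (Fin 3) k) :=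
  FreeLieAlgebra.lift k ![!![X 0, 0; 0, 0], !![X 1, X 2; 0, 0]]

variable {k}

theorem affineRep_of (i : Fin 2) :
    affineRep k (FreeLieAlgebra.of k i) = ![!![X 0, 0; 0, 0], !![X 1, X 2; 0, 0]] i :=
  FreeLieAlgebra.lift_of_apply _ i

theorem affineRep_apply_one (x : FreeLieAlgebra k (Fin 2)) : affineRep k x 1 = 0 := by
  have hx : x ∈ LieSubalgebra.lieSpan k _ (Set.range (FreeLieAlgebra.of k)) :=
    (FreeLieAlgebra.lieSpan_range_of_s16 k (Fin 2)).symm ▸ LieSubalgebra.mem_top x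
  induction hx using LieSubalgebra.lieSpan_induction with
  | mem x hx =>
    obtain ⟨i, rfl⟩ := hx
    ext j
    fin_cases i <;> fin_cases j <;> simp [affineRep_of]
  | zero => rfl
  | add x y _ _ hx hy => rw [map_add]; exact congr($hx + $hy).trans (add_zero 0)
  | smul t x _ hx => rw [map_smul]; exact congr(t • $hx).trans (smul_zero t)
  | lie x y _ _ hx hy =>
    ext j
    simp [Matrix.lie_eq_single_of_row_one_eq_zero hx hy]

theorem affineRep_apply_zero_zero_of_mem {x : FreeLieAlgebra k (Fin 2)}
    (hx : x ∈ LieAlgebra.derivedSeries k (FreeLieAlgebra k (Fin 2)) 1) :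
    affineRep k x 0 0 = 0 := by
  suffices h : (LieAlgebra.derivedSeries k (FreeLieAlgebra k (Fin 2)) 1).toSubmodule ≤
      LinearMap.ker ((Matrix.entryLinearMap k _ 0 0).comp (affineRep k).toLinearMap) from h hx
  refine LieSubmodule.lie_toSubmodule_le fun x _ y _ => ?_
  simp [Matrix.lie_eq_single_of_row_one_eq_zero (affineRep_apply_one x) (affineRep_apply_one y)]

theorem derivedSeries_two_le_ker_affineRep :
    LieAlgebra.derivedSeries k (FreeLieAlgebra k (Fin 2)) 2 ≤ (affineRep k).ker := by
  rw [LieAlgebra.derivedSeries_def, LieAlgebra.derivedSeriesOfIdeal_succ,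
    LieSubmodule.lie_le_iff]
  intro x hx y hy
  rw [LieHom.mem_ker, LieHom.map_lie,
    Matrix.lie_eq_single_of_row_one_eq_zero (affineRep_apply_one x) (affineRep_apply_one y),
    affineRep_apply_zero_zero_of_mem hx, affineRep_apply_zero_zero_of_mem hy]
  simp

end AffineRepresentation

theorem MvPolynomial.linearIndependent_X_pow_mul_X_pow_mul_X (R : Type*) [CommRing R] :
    LinearIndependent R fun pq : ℕ × ℕ =>
      (X 0 ^ (pq.1 + 1) * X 1 ^ pq.2 * X 2 : MvPolynomial (Fin 3) R) := by
  let e : ℕ × ℕ → Fin 3 →₀ ℕ := fun pq =>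
    Finsupp.single 0 (pq.1 + 1) + Finsupp.single 1 pq.2 + Finsupp.single 2 1
  have he : Function.Injective e := fun pq pq' h => by
    have h0 := DFunLike.congr_fun h 0
    have h1 := DFunLike.congr_fun h 1
    simp only [e, Finsupp.add_apply, Finsupp.single_apply] at h0 h1
    exact Prod.ext (by simpa using h0) (by simpa using h1)
  have h_eq : (fun pq : ℕ × ℕ => (X 0 ^ (pq.1 + 1) * X 1 ^ pq.2 * X 2 : MvPolynomial (Fin 3) R)) =
      basisMonomials (Fin 3) R ∘ e := by
    ext1 pq
    simp only [Function.comp_apply, e, coe_basisMonomials, X_pow_eq_monomial, monomial_mul]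
    rw [X, monomial_mul, mul_one, mul_one]
  exact h_eq ▸ (basisMonomials (Fin 3) R).linearIndependent.comp e he

section AdWord

variable {k : Type} [Field k] [CharZero k]

theorem adWord_succ_fst (p q : ℕ) :
    adWord k (p + 1, q) = ⁅FreeLieAlgebra.of k (0 : Fin 2), adWord k (p, q)⁆ :=
  Function.iterate_succ_apply' _ p _

theorem adWord_zero_zero :
    adWord k (0, 0) = ⁅FreeLieAlgebra.of k (0 : Fin 2), FreeLieAlgebra.of k (1 : Fin 2)⁆ :=
  rfl

theorem adWord_mem_derivedSeries_one (pq : ℕ × ℕ) :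
    adWord k pq ∈ LieAlgebra.derivedSeries k (FreeLieAlgebra k (Fin 2)) 1 := by
  set I := LieAlgebra.derivedSeries k (FreeLieAlgebra k (Fin 2)) 1
  have hI (i : Fin 2) : Set.MapsTo (fun y => ⁅FreeLieAlgebra.of k i, y⁆)
      (I : Set (FreeLieAlgebra k (Fin 2))) (I : Set (FreeLieAlgebra k (Fin 2))) :=
    fun _ hy => I.lie_mem hy
  exact (hI 0).iterate pq.1 ((hI 1).iterate pq.2
    (LieSubmodule.lie_mem_lie (LieSubmodule.mem_top _) (LieSubmodule.mem_top _)))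

theorem lie_of_one_adWord_sub_mem (p q : ℕ) :
    ⁅FreeLieAlgebra.of k (1 : Fin 2), adWord k (p, q)⁆ - adWord k (p, q + 1) ∈
      LieAlgebra.derivedSeries k (FreeLieAlgebra k (Fin 2)) 2 := by
  induction p with
  | zero => simp [adWord, Function.iterate_succ_apply']
  | succ p ih =>
    rw [adWord_succ_fst, adWord_succ_fst, leibniz_lie, add_sub_assoc, ← lie_sub]
    have hba : ⁅FreeLieAlgebra.of k (1 : Fin 2), FreeLieAlgebra.of k (0 : Fin 2)⁆ ∈
        LieAlgebra.derivedSeries k (FreeLieAlgebra k (Fin 2)) 1 :=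
      LieSubmodule.lie_mem_lie (LieSubmodule.mem_top _) (LieSubmodule.mem_top _)
    exact add_mem (LieSubmodule.lie_mem_lie hba (adWord_mem_derivedSeries_one _))
      (LieSubmodule.lie_mem _ ih)

theorem lie_of_adWord_mem_sup_span (i : Fin 2) (pq : ℕ × ℕ) :
    ⁅FreeLieAlgebra.of k i, adWord k pq⁆ ∈
      (LieAlgebra.derivedSeries k (FreeLieAlgebra k (Fin 2)) 2).toSubmodule ⊔
        Submodule.span k (Set.range (adWord k)) := by
  obtain ⟨p, q⟩ := pq
  fin_cases i
  · refine Submodule.mem_sup_right (Submodule.subset_span ⟨(p + 1, q), ?_⟩)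
    exact adWord_succ_fst p q
  · rw [← sub_add_cancel ⁅_, _⁆ (adWord k (p, q + 1))]
    exact add_mem (Submodule.mem_sup_left (lie_of_one_adWord_sub_mem p q))
      (Submodule.mem_sup_right (Submodule.subset_span ⟨_, rfl⟩))

theorem derivedSeries_one_le_sup_span_adWord :
    (LieAlgebra.derivedSeries k (FreeLieAlgebra k (Fin 2)) 1).toSubmodule ≤
      (LieAlgebra.derivedSeries k (FreeLieAlgebra k (Fin 2)) 2).toSubmodule ⊔
        Submodule.span k (Set.range (adWord k)) := by
  set N := (LieAlgebra.derivedSeries k (FreeLieAlgebra k (Fin 2)) 2).toSubmodule ⊔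
    Submodule.span k (Set.range (adWord k))
  have hN : ∀ x ∈ Set.range (FreeLieAlgebra.of k : Fin 2 → _), ∀ n ∈ N, ⁅x, n⁆ ∈ N := by
    rintro _ ⟨i, rfl⟩ n hn
    obtain ⟨u, hu, v, hv, rfl⟩ := Submodule.mem_sup.mp hn
    rw [lie_add]
    refine add_mem (Submodule.mem_sup_left (LieSubmodule.lie_mem _ hu)) ?_
    clear hn
    induction hv using Submodule.span_induction with
    | mem _ hw => obtain ⟨pq, rfl⟩ := hw; exact lie_of_adWord_mem_sup_span i pq
    | zero => simp
    | add _ _ _ _ hv hw => rw [lie_add]; exact add_mem hv hw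
    | smul t _ _ hv => rw [lie_smul]; exact N.smul_mem t hv
  have hgen : ∀ x ∈ Set.range (FreeLieAlgebra.of k : Fin 2 → _),
      ∀ y ∈ Set.range (FreeLieAlgebra.of k : Fin 2 → _), ⁅x, y⁆ ∈ N := by
    rintro _ ⟨i, rfl⟩ _ ⟨j, rfl⟩
    have hab : ⁅FreeLieAlgebra.of k (0 : Fin 2), FreeLieAlgebra.of k (1 : Fin 2)⁆ ∈ N :=
      Submodule.mem_sup_right (adWord_zero_zero (k := k) ▸ Submodule.subset_span ⟨_, rfl⟩)
    fin_cases i <;> fin_cases j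
    · simp
    · exact hab
    · exact (lie_skew (FreeLieAlgebra.of k (1 : Fin 2)) _) ▸ N.neg_mem hab
    · simp
  exact LieAlgebra.derivedSeries_one_le_of_lieSpan_eq_top
    (FreeLieAlgebra.lieSpan_range_of_s16 k (Fin 2)) hN hgen

theorem affineRep_adWord (pq : ℕ × ℕ) :
    affineRep k (adWord k pq) = Matrix.single 0 1 (X 0 ^ (pq.1 + 1) * X 1 ^ pq.2 * X 2) := by
  have hsemi (i : Fin 2) : Function.Semiconj (affineRep k) (fun y => ⁅FreeLieAlgebra.of k i, y⁆)
      (fun M => ⁅affineRep k (FreeLieAlgebra.of k i), M⁆) :=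
    fun y => LieHom.map_lie _ _ _
  have hrow (i : Fin 2) : affineRep k (FreeLieAlgebra.of k i) 1 = 0 := affineRep_apply_one _
  have hab : affineRep k ⁅FreeLieAlgebra.of k (0 : Fin 2), FreeLieAlgebra.of k (1 : Fin 2)⁆ =
      Matrix.single 0 1 (X 0 * X 2) := by
    rw [LieHom.map_lie, Matrix.lie_eq_single_of_row_one_eq_zero (hrow 0) (hrow 1)]
    simp [affineRep_of]
  rw [adWord, ((hsemi 0).iterate_right _).eq, ((hsemi 1).iterate_right _).eq, hab,
    Matrix.iterate_lie_single_zero_one (hrow 1), Matrix.iterate_lie_single_zero_one (hrow 0)]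
  simp only [affineRep_of]
  congr 1
  simp
  ring

theorem linearIndependent_mkQ_adWord :
    LinearIndependent k fun pq : ℕ × ℕ =>
      (LieAlgebra.derivedSeries k (FreeLieAlgebra k (Fin 2)) 2).toSubmodule.mkQ (adWord k pq) := by
  let ψ := (Matrix.entryLinearMap k (MvPolynomial (Fin 3) k) 0 1).comp (affineRep k).toLinearMap
  have hψ : (LieAlgebra.derivedSeries k _ 2).toSubmodule ≤ LinearMap.ker ψ := fun x hx => by
    simp [ψ, LieHom.mem_ker.mp (derivedSeries_two_le_ker_affineRep hx)]
  refine LinearIndependent.of_comp (Submodule.liftQ _ ψ hψ) ?_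
  have h_comp : Submodule.liftQ _ ψ hψ ∘ (fun pq => Submodule.mkQ _ (adWord k pq)) =
      fun pq : ℕ × ℕ => (X 0 ^ (pq.1 + 1) * X 1 ^ pq.2 * X 2 : MvPolynomial (Fin 3) k) := by
    ext1 pq
    simp [ψ, affineRep_adWord]
  exact h_comp ▸ MvPolynomial.linearIndependent_X_pow_mul_X_pow_mul_X k

theorem span_mkQ_adWord :
    Submodule.span k (Set.range fun pq : ℕ × ℕ =>
        (LieAlgebra.derivedSeries k (FreeLieAlgebra k (Fin 2)) 2).toSubmodule.mkQ (adWord k pq)) =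
      Submodule.map (LieAlgebra.derivedSeries k (FreeLieAlgebra k (Fin 2)) 2).toSubmodule.mkQ
        (LieAlgebra.derivedSeries k (FreeLieAlgebra k (Fin 2)) 1).toSubmodule := by
  set D₂ := (LieAlgebra.derivedSeries k (FreeLieAlgebra k (Fin 2)) 2).toSubmodule
  refine le_antisymm ?_ ?_
  · rw [Submodule.span_le]
    rintro _ ⟨pq, rfl⟩
    exact Submodule.mem_map_of_mem (adWord_mem_derivedSeries_one pq)
  · calc _ ≤ Submodule.map D₂.mkQ (D₂ ⊔ Submodule.span k (Set.range (adWord k))) :=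
          Submodule.map_mono derivedSeries_one_le_sup_span_adWord
      _ = _ := by
        rw [Submodule.map_sup, Submodule.mkQ_map_self, bot_sup_eq, Submodule.map_span,
          ← Set.range_comp]
        rfl

end AdWord

/-- The images in `L′/L′′` of the elements `(ad a)^p (ad b)^q (⁅a, b⁆)`,
`(p, q) ∈ ℕ × ℕ`, form a basis of `L′/L′′`, where `L = f_2` is the free Lie
algebra on `a, b`, `L′ = ⁅L, L⁆` and `L′′ = ⁅L′, L′⁆`.  Since the natural map
`L′ → L ⧸ L′′` has kernel `L′′` and image the image of `L′`, this says exactly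
that the images of these elements in `L ⧸ L′′` are linearly independent and span
the image of `L′`.  (Footnote 7 and Lemma 6.2 of the paper.) -/
theorem basis_of_derived_quotient (k : Type) [Field k] [CharZero k]
    (L' L'' : LieIdeal k (FreeLieAlgebra k (Fin 2)))
    (hL' : L' = ⁅(⊤ : LieIdeal k (FreeLieAlgebra k (Fin 2))),
      (⊤ : LieIdeal k (FreeLieAlgebra k (Fin 2)))⁆)
    (hL'' : L'' = ⁅L', L'⁆) :
    LinearIndependent k
      (fun pq : ℕ × ℕ => (L''.toSubmodule).mkQ (adWord k pq)) ∧
    Submodule.span k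
        (Set.range fun pq : ℕ × ℕ => (L''.toSubmodule).mkQ (adWord k pq)) =
      Submodule.map (L''.toSubmodule).mkQ L'.toSubmodule := by
  replace hL' : L' = LieAlgebra.derivedSeries k _ 1 := hL'
  subst hL'
  replace hL'' : L'' = LieAlgebra.derivedSeries k _ 2 := hL''
  subst hL''
  exact ⟨linearIndependent_mkQ_adWord, span_mkQ_adWord⟩
end
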